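/- Let G = (V,E) be a d-regular graph with normalized second eigenvalue λ₂, and let A, B ⊆ V be disjoint vertex subsets with w(A) ≥ γ, w(B) ≥ γ, and e(A,B) ≤ ξ, where γ > 0. Then e(A ∪ B) ≤ 3·max{λ₂, ξ}/γ. -/

import Mathlib

open scoped Classical

/-- `w(A) = |A| / |V|`: the fraction of vertices lying in `A`. -/
noncomputable def wFrac {V : Type*} [Fintype V] (A : Finset V) : ℝ :=
  (A.card : ℝ) / (Fintype.card V : ℝ)

/-- The number of ordered pairs of adjacent vertices of `G`, i.e. `2|E|`. -/
noncomputable def dartCount {V : Type*} [Fintype V] (G : SimpleGraph V) : ℕ :=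
  (Finset.univ.filter fun p : V × V => G.Adj p.1 p.2).card

/-- `e(A) = |E(A)| / |E|`: the fraction of edges having both endpoints in `A`
(the number of ordered adjacent pairs with both entries in `A` is `2|E(A)|`). -/
noncomputable def eFracIn {V : Type*} [Fintype V] (G : SimpleGraph V) (A : Finset V) : ℝ :=
  ((Finset.univ.filter fun p : V × V => G.Adj p.1 p.2 ∧ p.1 ∈ A ∧ p.2 ∈ A).card : ℝ) /
    (dartCount G : ℝ)

/-- `e(A, B) = |E(A, B)| / |E|` for disjoint `A, B`: the fraction of edges having one
endpoint in `A` and the other in `B` (each such edge is counted by exactly one ordered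
pair with first entry in `A` and second entry in `B`). -/
noncomputable def eFracBetween {V : Type*} [Fintype V] (G : SimpleGraph V)
    (A B : Finset V) : ℝ :=
  2 * ((Finset.univ.filter fun p : V × V => G.Adj p.1 p.2 ∧ p.1 ∈ A ∧ p.2 ∈ B).card : ℝ) /
    (dartCount G : ℝ)

/-- The normalized second eigenvalue of a `d`-regular graph `G`, defined via the
Courant–Fischer characterization (the supremum of Rayleigh quotients over nonzero
vectors orthogonal to the all-ones vector).  By convention, a `0`-regular
(empty) graph has normalized second eigenvalue `1`. -/
noncomputable def normSecondEig {V : Type*} [Fintype V] (d : ℕ) (G : SimpleGraph V) : ℝ :=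
  if d = 0 then 1
  else sSup {r : ℝ | ∃ x : V → ℝ, x ≠ 0 ∧ (∑ i, x i) = 0 ∧
    r = (∑ i, ∑ j, (if G.Adj i j then (d : ℝ)⁻¹ else 0) * x i * x j) / ∑ i, (x i) ^ 2}

/-!
Test the Rayleigh quotient defining `λ₂` on `x = |B|·𝟙_A - |A|·𝟙_B`, which is orthogonal to the
constants. Writing `N(X, Y)` for the number of ordered adjacent pairs in `X × Y`, one has
`‖x‖² = |A||B|(|A| + |B|)` and `⟪x, Adj x⟫ = |B|²·N(A, A) + |A|²·N(B, B) - 2|A||B|·N(A, B)`.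
Dividing by `|A||B|` leaves the edges inside `A` and inside `B` with weights `|B|/|A|` and
`|A|/|B|`, both at least `γ`, bounded by `λ₂·d·|A ∪ B|` plus a multiple of `N(A, B)`, which `ξ`
controls.
-/

open Finset Matrix

theorem Finset.sum_indicator_one_eq_card {α R : Type*} [Fintype α] [AddCommMonoidWithOne R]
    (s : Finset α) : ∑ i, (s : Set α).indicator (1 : α → R) i = #s := by
  simp [Set.indicator_apply]

namespace SimpleGraph

variable {V : Type*} [Fintype V] (G : SimpleGraph V)

noncomputable def adjPairCount (X Y : Finset V) : ℕ :=
  (Finset.univ.filter fun p : V × V => G.Adj p.1 p.2 ∧ p.1 ∈ X ∧ p.2 ∈ Y).card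

theorem indicator_dotProduct_adjMatrix_mulVec_indicator (X Y : Finset V) :
    (X : Set V).indicator 1 ⬝ᵥ G.adjMatrix ℝ *ᵥ (Y : Set V).indicator 1 =
      G.adjPairCount X Y := by
  rw [dotProduct_mulVec_adjMatrix, adjPairCount, natCast_card_filter, Fintype.sum_prod_type]
  refine sum_congr rfl fun i _ => sum_congr rfl fun j _ => ?_
  by_cases hi : i ∈ X <;> by_cases hj : j ∈ Y <;> simp [hi, hj]

theorem adjPairCount_comm (X Y : Finset V) : G.adjPairCount Y X = G.adjPairCount X Y :=
  card_equiv (Equiv.prodComm V V) fun p => by simp [G.adj_comm p.1 p.2, and_comm]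

variable {G} {d : ℕ}

theorem dartCount_eq (hreg : G.IsRegularOfDegree d) : (dartCount G : ℝ) = Fintype.card V * d := by
  have h := G.indicator_dotProduct_adjMatrix_mulVec_indicator univ univ
  simp only [coe_univ, Set.indicator_univ] at h
  have hdart : dartCount G = G.adjPairCount univ univ := by simp [dartCount, adjPairCount]
  rw [hdart, ← h]
  simp [dotProduct, hreg _]

theorem adjPairCount_union_self {A B : Finset V} (hAB : Disjoint A B) :
    (G.adjPairCount (A ∪ B) (A ∪ B) : ℝ) =
      G.adjPairCount A A + G.adjPairCount B B + 2 * G.adjPairCount A B := by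
  have hunion : ((A ∪ B : Finset V) : Set V).indicator (1 : V → ℝ) =
      (A : Set V).indicator 1 + (B : Set V).indicator 1 := by
    rw [coe_union, Set.indicator_union_of_disjoint (disjoint_coe.2 hAB)]
    rfl
  rw [← indicator_dotProduct_adjMatrix_mulVec_indicator, hunion, mulVec_add, add_dotProduct,
    dotProduct_add, dotProduct_add]
  simp only [indicator_dotProduct_adjMatrix_mulVec_indicator, adjPairCount_comm]
  ring

theorem dotProduct_adjMatrix_mulVec_le (hreg : G.IsRegularOfDegree d) (x : V → ℝ) :
    x ⬝ᵥ G.adjMatrix ℝ *ᵥ x ≤ d * ∑ i, x i ^ 2 := by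
  have hlap : 0 ≤ x ⬝ᵥ G.lapMatrix ℝ *ᵥ x := by
    rw [← toLinearMap₂'_apply', lapMatrix_toLinearMap₂']
    positivity
  simp only [lapMatrix, sub_mulVec, dotProduct_sub, dotProduct_mulVec_degMatrix, hreg _] at hlap
  simp only [mul_sum, sq, ← mul_assoc]
  linarith

theorem rayleigh_numerator_eq (x : V → ℝ) :
    ∑ i, ∑ j, (if G.Adj i j then (d : ℝ)⁻¹ else 0) * x i * x j =
      (d : ℝ)⁻¹ * (x ⬝ᵥ G.adjMatrix ℝ *ᵥ x) := by
  simp [dotProduct_mulVec_adjMatrix, mul_sum, ite_mul, mul_assoc]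

theorem dotProduct_adjMatrix_mulVec_le_normSecondEig (hreg : G.IsRegularOfDegree d) (hd : d ≠ 0)
    {x : V → ℝ} (hx : ∑ i, x i = 0) :
    x ⬝ᵥ G.adjMatrix ℝ *ᵥ x ≤ normSecondEig d G * (d * ∑ i, x i ^ 2) := by
  obtain rfl | hx0 := eq_or_ne x 0
  · simp
  have hd' : (0 : ℝ) < d := by positivity
  have hsq : 0 < ∑ i, x i ^ 2 := by
    obtain ⟨i, hi⟩ := Function.ne_iff.mp hx0
    exact sum_pos' (fun j _ => sq_nonneg (x j)) ⟨i, mem_univ i, pow_two_pos_of_ne_zero hi⟩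
  have hle : (d : ℝ)⁻¹ * (x ⬝ᵥ G.adjMatrix ℝ *ᵥ x) / ∑ i, x i ^ 2 ≤ normSecondEig d G := by
    rw [normSecondEig, if_neg hd]
    refine le_csSup ⟨1, ?_⟩ ⟨x, hx0, hx, by rw [rayleigh_numerator_eq]⟩
    rintro r ⟨y, -, -, rfl⟩
    rw [rayleigh_numerator_eq, inv_mul_eq_div, div_div]
    exact div_le_one_of_le₀ (dotProduct_adjMatrix_mulVec_le hreg y) (by positivity)
  rw [div_le_iff₀ hsq, inv_mul_le_iff₀ hd'] at hle
  linarith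

theorem adjPairCount_spectral_bound (hreg : G.IsRegularOfDegree d) (hd : d ≠ 0) {A B : Finset V}
    (hAB : Disjoint A B) :
    (#B : ℝ) ^ 2 * G.adjPairCount A A + (#A : ℝ) ^ 2 * G.adjPairCount B B
        - 2 * #A * #B * G.adjPairCount A B ≤
      normSecondEig d G * (d * (#A * #B * (#A + #B))) := by
  set a : ℝ := (#A : ℝ)
  set b : ℝ := (#B : ℝ)
  set χA : V → ℝ := (A : Set V).indicator 1
  set χB : V → ℝ := (B : Set V).indicator 1
  set x : V → ℝ := b • χA - a • χB
  have hsum : ∑ i, x i = 0 := by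
    simp only [x, Pi.sub_apply, Pi.smul_apply, smul_eq_mul, sum_sub_distrib, ← mul_sum, χA, χB,
      sum_indicator_one_eq_card]
    ring
  have hsq : ∑ i, x i ^ 2 = a * b * (a + b) := by
    have hx : ∀ i, x i ^ 2 = b ^ 2 * χA i + a ^ 2 * χB i := by
      intro i
      by_cases hiA : i ∈ A
      · simp [x, χA, χB, hiA, Finset.disjoint_left.1 hAB hiA]
      · by_cases hiB : i ∈ B <;> simp [x, χA, χB, hiA, hiB]
    simp only [hx, sum_add_distrib, ← mul_sum, χA, χB, sum_indicator_one_eq_card]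
    ring
  have hq : x ⬝ᵥ G.adjMatrix ℝ *ᵥ x = b ^ 2 * G.adjPairCount A A + a ^ 2 * G.adjPairCount B B
        - 2 * a * b * G.adjPairCount A B := by
    simp only [x, mulVec_sub, mulVec_smul, sub_dotProduct, dotProduct_sub, smul_dotProduct,
      dotProduct_smul, χA, χB, indicator_dotProduct_adjMatrix_mulVec_indicator, adjPairCount_comm,
      smul_eq_mul]
    ring
  simpa [hq, hsq] using dotProduct_adjMatrix_mulVec_le_normSecondEig hreg hd hsum

end SimpleGraph

theorem union_density_le_of_spectral_bound {γ ξ lam n d a b eAA eBB eAB : ℝ} (hγ : 0 < γ)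
    (hn : 0 < n) (hd : 0 < d) (ha : γ * n ≤ a) (hb : γ * n ≤ b) (hab : a + b ≤ n)
    (hAA : 0 ≤ eAA) (hBB : 0 ≤ eBB) (hAB : 0 ≤ eAB)
    (hspec : b ^ 2 * eAA + a ^ 2 * eBB - 2 * a * b * eAB ≤ lam * (d * (a * b * (a + b))))
    (hξ : 2 * eAB / (n * d) ≤ ξ) :
    (eAA + eBB + 2 * eAB) / (n * d) ≤ 3 * max lam ξ / γ := by
  have hnd : 0 < n * d := mul_pos hn hd
  rw [div_le_iff₀ hnd] at hξ
  rw [div_le_div_iff₀ hnd hγ]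
  set M := max lam ξ
  have hM : 0 ≤ M := le_max_of_le_right (nonneg_of_mul_nonneg_left (by linarith) hnd)
  have ha0 : 0 < a := (mul_pos hγ hn).trans_le ha
  have hb0 : 0 < b := (mul_pos hγ hn).trans_le hb
  have hγ1 : γ ≤ 1 := le_of_mul_le_mul_right (by linarith) hn
  have hγa : γ * a ≤ b := (mul_le_mul_of_nonneg_left (by linarith) hγ.le).trans hb
  have hγb : γ * b ≤ a := (mul_le_mul_of_nonneg_left (by linarith) hγ.le).trans ha
  have hin : γ * (eAA + eBB) ≤ lam * (d * (a + b)) + 2 * eAB := by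
    refine le_of_mul_le_mul_left ?_ (mul_pos ha0 hb0)
    nlinarith [mul_le_mul_of_nonneg_right hγa (mul_nonneg hb0.le hAA),
      mul_le_mul_of_nonneg_right hγb (mul_nonneg ha0.le hBB)]
  have hlam : lam * (d * (a + b)) ≤ M * (n * d) :=
    calc lam * (d * (a + b)) ≤ M * (d * (a + b)) :=
          mul_le_mul_of_nonneg_right (le_max_left lam ξ) (by nlinarith)
      _ ≤ M * (d * n) := by gcongr
      _ = M * (n * d) := by ring
  have hξM : ξ * (n * d) ≤ M * (n * d) := mul_le_mul_of_nonneg_right (le_max_right lam ξ) hnd.le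
  nlinarith

/-- In a `d`-regular graph `G` with normalized second eigenvalue `λ₂`,
if `A, B` are disjoint vertex subsets with `w(A), w(B) ≥ γ > 0` and `e(A, B) ≤ ξ`,
then `e(A ∪ B) ≤ 3 max{λ₂, ξ} / γ`. -/
theorem nearly_independent_union {V : Type*} [Fintype V] (d : ℕ) (G : SimpleGraph V)
    (hreg : G.IsRegularOfDegree d) (A B : Finset V) (hAB : Disjoint A B)
    (γ ξ : ℝ) (hγ : 0 < γ) (hA : γ ≤ wFrac A) (hB : γ ≤ wFrac B)
    (hξ : eFracBetween G A B ≤ ξ) :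
    eFracIn G (A ∪ B) ≤ 3 * max (normSecondEig d G) ξ / γ := by
  obtain rfl | hd := eq_or_ne d 0
  · rw [eFracIn, G.dartCount_eq hreg, Nat.cast_zero, mul_zero, div_zero, normSecondEig,
      if_pos rfl]
    positivity
  have hn : (0 : ℝ) < Fintype.card V := by
    refine lt_of_le_of_ne (Nat.cast_nonneg _) fun h => ?_
    rw [wFrac, ← h, div_zero] at hA
    exact hγ.not_ge hA
  rw [wFrac, le_div_iff₀ hn] at hA hB
  rw [eFracBetween, ← SimpleGraph.adjPairCount, G.dartCount_eq hreg] at hξ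
  rw [eFracIn, ← SimpleGraph.adjPairCount, G.dartCount_eq hreg,
    G.adjPairCount_union_self hAB]
  have hcard : (#A : ℝ) + #B ≤ Fintype.card V := by
    exact_mod_cast (card_union_of_disjoint hAB).symm.trans_le (card_le_univ _)
  exact union_density_le_of_spectral_bound hγ hn (by positivity) hA hB hcard (by positivity)
    (by positivity) (by positivity) (G.adjPairCount_spectral_bound hreg hd hAB) hξ
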